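/- Let b : ℝ → ℝ be given by b(x) = 1 for x < 0 and b(x) = 1/2 for x ≥ 0. Define X : [0,∞) × ℝ → ℝ by: X(t,x) = x + t if x < 0 and t ≤ −x; X(t,x) = (t + x)/2 if x < 0 and t ≥ −x; and X(t,x) = x + t/2 if x ≥ 0. Then: (i) for every x ∈ ℝ, the curve t ↦ X(t,x) is Lipschitz and satisfies X(t,x) = x + ∫₀^t b(X(s,x)) ds for all t ≥ 0; (ii) for every t ≥ 0 the map x ↦ X(t,x) is strictly increasing and bi-Lipschitz, with (y−x)/2 ≤ X(t,y) − X(t,x) ≤ y − x for all x < y; in particular X satisfies the compressibility condition |A|/2 ≤ |{x : X(t,x) ∈ A}| ≤ 2|A| for every Borel set A ⊂ ℝ and every t ≥ 0. -/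

import Mathlib

open MeasureTheory Set
open scoped Classical ENNReal NNReal

/-- The discontinuous field `b(x) = 1` for `x < 0`, `b(x) = 1/2` for `x ≥ 0`. -/
noncomputable def bjump : ℝ → ℝ := fun x => if x < 0 then 1 else 1 / 2

/-- The flow of `bjump` : `X(t,x) = x + t` while `x + t ≤ 0` (for `x < 0`), then
`X(t,x) = (t+x)/2`; and `X(t,x) = x + t/2` for `x ≥ 0`. -/
noncomputable def Xjump (t x : ℝ) : ℝ :=
  if x < 0 then (if t ≤ -x then x + t else (t + x) / 2) else x + t / 2

/-- Explicit inverse of `x ↦ Xjump t x`. -/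
noncomputable def Yjump (t z : ℝ) : ℝ :=
  if z < 0 then z - t else if z < t / 2 then 2 * z - t else z - t / 2

lemma Xjump_Yjump {t : ℝ} (ht : 0 ≤ t) (z : ℝ) : Xjump t (Yjump t z) = z := by
  unfold Xjump Yjump
  split_ifs <;> (try push_neg at *) <;> linarith

lemma Xjump_bounds {t : ℝ} (ht : 0 ≤ t) {x y : ℝ} (hxy : x < y) :
    (y - x) / 2 ≤ Xjump t y - Xjump t x ∧ Xjump t y - Xjump t x ≤ y - x := by
  unfold Xjump
  split_ifs <;> (try push_neg at *) <;> constructor <;> linarith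

lemma Xjump_lipschitz_x {t : ℝ} (ht : 0 ≤ t) : LipschitzWith 1 (fun x => Xjump t x) := by
  apply LipschitzWith.of_dist_le_mul
  intro a b
  simp only [Real.dist_eq, NNReal.coe_one, one_mul, Xjump]
  split_ifs <;> (try push_neg at *) <;> rw [abs_sub_le_iff] <;> constructor <;>
    linarith [le_abs_self (a - b), neg_le_abs (a - b), abs_nonneg (a - b)]

lemma Xjump_lipschitz_t (x : ℝ) : LipschitzWith 1 (fun t => Xjump t x) := by
  apply LipschitzWith.of_dist_le_mul
  intro a b
  simp only [Real.dist_eq, NNReal.coe_one, one_mul, Xjump]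
  split_ifs <;> (try push_neg at *) <;> rw [abs_sub_le_iff] <;> constructor <;>
    linarith [le_abs_self (a - b), neg_le_abs (a - b), abs_nonneg (a - b)]

lemma Yjump_lipschitz {t : ℝ} (ht : 0 ≤ t) : LipschitzWith 2 (Yjump t) := by
  apply LipschitzWith.of_dist_le_mul
  intro a b
  have h2 : ((2 : NNReal) : ℝ) = 2 := by norm_num
  simp only [Real.dist_eq, h2, Yjump]
  split_ifs <;> (try push_neg at *) <;> rw [abs_sub_le_iff] <;> constructor <;>
    linarith [le_abs_self (a - b), neg_le_abs (a - b), abs_nonneg (a - b)]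

lemma gjump_intervalIntegrable (c a b : ℝ) :
    IntervalIntegrable (fun s => if s < c then (1 : ℝ) else 1 / 2) volume a b := by
  rw [intervalIntegrable_iff]
  apply Measure.integrableOn_of_bounded (M := 1)
  · exact measure_Ioc_lt_top.ne
  · exact ((measurable_const.ite measurableSet_Iio measurable_const)).aestronglyMeasurable
  · filter_upwards with s
    split_ifs <;> simp [Real.norm_eq_abs, abs_le] <;> norm_num

lemma integral_gjump_one {c t : ℝ} (ht : 0 ≤ t) (htc : t ≤ c) :
    ∫ s in (0 : ℝ)..t, (if s < c then (1 : ℝ) else 1 / 2) = t := by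
  have hne : ∀ᵐ s : ℝ, s ≠ c := by
    have := measure_eq_zero_iff_ae_notMem.mp (measure_singleton c (μ := volume))
    simpa using this
  rw [intervalIntegral.integral_congr_ae (g := fun _ => (1 : ℝ)) ?_,
    intervalIntegral.integral_const]
  · simp
  · filter_upwards [hne] with s hs hmem
    rw [Set.uIoc_of_le ht] at hmem
    exact if_pos (lt_of_le_of_ne (hmem.2.trans htc) hs)

lemma integral_gjump {c t : ℝ} (hc : 0 ≤ c) (ht : 0 ≤ t) :
    ∫ s in (0 : ℝ)..t, (if s < c then (1 : ℝ) else 1 / 2) =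
      if t ≤ c then t else c + (t - c) / 2 := by
  split_ifs with h
  · exact integral_gjump_one ht h
  · push_neg at h
    rw [← intervalIntegral.integral_add_adjacent_intervals
        (gjump_intervalIntegrable c 0 c) (gjump_intervalIntegrable c c t),
      integral_gjump_one hc le_rfl]
    have e2 : ∫ s in c..t, (if s < c then (1 : ℝ) else 1 / 2) = (t - c) * (1 / 2) := by
      rw [intervalIntegral.integral_congr (g := fun _ => (1 : ℝ) / 2) ?_,
        intervalIntegral.integral_const, smul_eq_mul]
      intro s hs
      rw [Set.uIcc_of_le h.le] at hs
      exact if_neg (not_lt.mpr hs.1)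
    rw [e2]; ring

/-- (i) each trajectory of `Xjump` is Lipschitz and satisfies the
integral equation `X(t,x) = x + ∫₀ᵗ b(X(s,x)) ds`; (ii) for each `t ≥ 0`, `x ↦ X(t,x)`
is strictly increasing and bi-Lipschitz with `(y-x)/2 ≤ X(t,y) - X(t,x) ≤ y - x` for
`x < y`; in particular `|A|/2 ≤ |{x : X(t,x) ∈ A}| ≤ 2|A|` for every Borel set `A`. -/
theorem stmt19 :
    (∀ x : ℝ, (∃ L : NNReal, LipschitzWith L fun t => Xjump t x) ∧
      ∀ t : ℝ, 0 ≤ t → Xjump t x = x + ∫ s in (0 : ℝ)..t, bjump (Xjump s x)) ∧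
    (∀ t : ℝ, 0 ≤ t →
      StrictMono (fun x => Xjump t x) ∧
      (∀ x y : ℝ, x < y →
        (y - x) / 2 ≤ Xjump t y - Xjump t x ∧ Xjump t y - Xjump t x ≤ y - x) ∧
      ∀ A : Set ℝ, MeasurableSet A →
        volume A / 2 ≤ volume {x | Xjump t x ∈ A} ∧
          volume {x | Xjump t x ∈ A} ≤ 2 * volume A) := by
  constructor
  · -- part (i)
    intro x
    refine ⟨⟨1, Xjump_lipschitz_t x⟩, ?_⟩
    intro t ht
    by_cases hx : x < 0
    · have key : ∫ s in (0 : ℝ)..t, bjump (Xjump s x)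
          = ∫ s in (0 : ℝ)..t, (if s < -x then (1 : ℝ) else 1 / 2) := by
        apply intervalIntegral.integral_congr
        intro s hs
        rw [Set.uIcc_of_le ht] at hs
        simp only [bjump, Xjump, if_pos hx]
        split_ifs <;> (try push_neg at *) <;> first | rfl | linarith
      rw [key, integral_gjump (by linarith) ht]
      simp only [Xjump, if_pos hx]
      split_ifs <;> (try push_neg at *) <;> ring
    · push_neg at hx
      have key : ∫ s in (0 : ℝ)..t, bjump (Xjump s x)
          = ∫ s in (0 : ℝ)..t, (fun _ => (1 : ℝ) / 2) s := by
        apply intervalIntegral.integral_congr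
        intro s hs
        rw [Set.uIcc_of_le ht] at hs
        simp only [bjump, Xjump, if_neg (not_lt.mpr hx)]
        rw [if_neg (by push_neg; linarith [hs.1])]
      rw [key, intervalIntegral.integral_const, smul_eq_mul]
      simp only [Xjump, if_neg (not_lt.mpr hx)]
      ring
  · -- part (ii)
    intro t ht
    have hmono : StrictMono (fun x => Xjump t x) := by
      intro x y hxy
      have := (Xjump_bounds ht hxy).1
      simp only
      linarith
    refine ⟨hmono, fun x y hxy => Xjump_bounds ht hxy, ?_⟩
    intro A _
    have hfY : ∀ z, Xjump t (Yjump t z) = z := Xjump_Yjump ht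
    have hinj : Function.Injective (fun x => Xjump t x) := hmono.injective
    have hYf : ∀ x, Yjump t (Xjump t x) = x := fun x => hinj (hfY (Xjump t x))
    have hset : {x | Xjump t x ∈ A} = Yjump t '' A := by
      ext z
      constructor
      · intro hz
        exact ⟨Xjump t z, hz, hYf z⟩
      · rintro ⟨a, ha, rfl⟩
        show Xjump t (Yjump t a) ∈ A
        rw [hfY]
        exact ha
    have hA : A = (fun x => Xjump t x) '' {x | Xjump t x ∈ A} := by
      ext z
      constructor
      · intro hz
        exact ⟨Yjump t z, by simpa [mem_setOf_eq, hfY z] using hz, hfY z⟩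
      · rintro ⟨w, hw, rfl⟩
        exact hw
    constructor
    · -- lower bound
      have h1 : volume A ≤ volume {x | Xjump t x ∈ A} := by
        calc volume A = μH[1] ((fun x => Xjump t x) '' {x | Xjump t x ∈ A}) := by
              rw [MeasureTheory.hausdorffMeasure_real, ← hA]
          _ ≤ ((1 : NNReal) : ℝ≥0∞) ^ (1 : ℝ) * μH[1] {x | Xjump t x ∈ A} :=
              (Xjump_lipschitz_x ht).hausdorffMeasure_image_le zero_le_one _
          _ = volume {x | Xjump t x ∈ A} := by
              rw [MeasureTheory.hausdorffMeasure_real]; simp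
      exact le_trans ENNReal.half_le_self h1
    · -- upper bound
      calc volume {x | Xjump t x ∈ A} = μH[1] (Yjump t '' A) := by
            rw [MeasureTheory.hausdorffMeasure_real, hset]
        _ ≤ ((2 : NNReal) : ℝ≥0∞) ^ (1 : ℝ) * μH[1] A :=
            (Yjump_lipschitz ht).hausdorffMeasure_image_le zero_le_one A
        _ = 2 * volume A := by
            rw [MeasureTheory.hausdorffMeasure_real, ENNReal.rpow_one]
            norm_num
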